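/- Let n ≥ 2 and define the n×n matrices over ℚ(q₁,…,q_m)[t]: M(q_j; t) with diagonal entries q_{j,1},…,q_{j,n}, entries 1 on the subdiagonal, entry t in position (1,n), and 0 elsewhere. Then the (i,j) entry of the product ℳ(t) = M(q₁;t) M(q₂;t) ⋯ M(q_m;t) equals Σ_{s≥0} e^{(i)}_{j-i+m-sn} t^s, where e_k^{(r)} = Σ_{1≤j₁<⋯<j_k≤m} q_{j₁, r+1-j₁} q_{j₂, r+2-j₂} ⋯ q_{j_k, r+k-j_k} (second indices modulo n), with e_0^{(r)} = 1 and e_k^{(r)} = 0 for k < 0 or k > m. -/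
import Mathlib


/-- The loop elementary symmetric function
`e_k^{(r)} = Σ_{1≤j₁<⋯<j_k≤m} q_{j₁,r+1-j₁} q_{j₂,r+2-j₂} ⋯ q_{j_k,r+k-j_k}`
(second indices modulo `n`), written as a sum over strictly increasing maps
`Fin k → Fin m`.  It equals `1` for `k = 0` and vanishes for `k > m`. -/
def loopE {K : Type*} [CommRing K] (n m : ℕ) (k : ℕ) (r : ZMod n)
    (q : Fin m → ZMod n → K) : K :=
  ∑ f ∈ Finset.univ.filter (fun f : Fin k → Fin m => ∀ a b : Fin k, a < b → f a < f b),
    ∏ a : Fin k, q (f a) (r + ((a : ℕ) : ZMod n) - (((f a : ℕ) : ℕ) : ZMod n))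

/-- `e` extended to integer indices: zero for negative indices. -/
def loopEZ {K : Type*} [CommRing K] (n m : ℕ) (z : ℤ) (r : ZMod n)
    (q : Fin m → ZMod n → K) : K :=
  if 0 ≤ z then loopE n m z.toNat r q else 0

/-- The n×n matrix `M(r;t)`, with diagonal entries `r_1,…,r_n`, entries `1` on the
subdiagonal, entry `t` in position `(1,n)`, and `0` elsewhere. -/
def Mmat {K : Type*} [CommRing K] (n : ℕ) (r : ZMod n → K) (t : K) :
    Matrix (Fin n) (Fin n) K :=
  Matrix.of fun a b =>
    (if a = b then r (((a : ℕ) + 1 : ℕ) : ZMod n) else 0) +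
    (if (a : ℕ) = (b : ℕ) + 1 then 1 else 0) +
    (if (a : ℕ) = 0 ∧ (b : ℕ) = n - 1 then t else 0)

lemma loopE_zero {K : Type*} [CommRing K] (n m : ℕ) (r : ZMod n) (q : Fin m → ZMod n → K) :
    loopE n m 0 r q = 1 := by
  unfold loopE
  rw [Finset.filter_true_of_mem (fun f _ a => a.elim0)]
  simp

lemma loopE_gt {K : Type*} [CommRing K] {n m k : ℕ} (h : m < k) (r : ZMod n)
    (q : Fin m → ZMod n → K) : loopE n m k r q = 0 := by
  unfold loopE
  rw [Finset.filter_false_of_mem, Finset.sum_empty]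
  intro f _ hf
  have hinj : Function.Injective f := by
    intro a b hab
    rcases lt_trichotomy a b with h1|h1|h1
    · exact absurd hab (hf a b h1).ne
    · exact h1
    · exact absurd hab.symm (hf b a h1).ne
  have := Fintype.card_le_of_injective f hinj
  simp at this
  omega

lemma loopEZ_neg {K : Type*} [CommRing K] {n m : ℕ} {z : ℤ} (h : z < 0) (r : ZMod n)
    (q : Fin m → ZMod n → K) : loopEZ n m z r q = 0 :=
  if_neg (not_le.mpr h)

lemma loopEZ_zero {K : Type*} [CommRing K] (n m : ℕ) (r : ZMod n)
    (q : Fin m → ZMod n → K) : loopEZ n m 0 r q = 1 := by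
  rw [loopEZ, if_pos le_rfl]
  exact loopE_zero n m r q

lemma loopEZ_gt {K : Type*} [CommRing K] {n m : ℕ} {z : ℤ} (h : (m : ℤ) < z) (r : ZMod n)
    (q : Fin m → ZMod n → K) : loopEZ n m z r q = 0 := by
  rw [loopEZ, if_pos (by omega)]
  exact loopE_gt (by omega) r q

lemma loopE_succ {K : Type*} [CommRing K] (n m k : ℕ) (r : ZMod n)
    (q : Fin (m+1) → ZMod n → K) :
    loopE n (m+1) (k+1) r q =
      q 0 r * loopE n m k r (fun j => q j.succ)
        + loopE n m (k+1) (r-1) (fun j => q j.succ) := by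
  classical
  unfold loopE
  rw [← Finset.sum_filter_add_sum_filter_not
        (Finset.univ.filter
          (fun f : Fin (k+1) → Fin (m+1) => ∀ a b : Fin (k+1), a < b → f a < f b))
        (fun f => f 0 = 0)]
  congr 1
  · -- part A : f 0 = 0
    rw [Finset.mul_sum]
    refine Finset.sum_bij'
      (i := fun f hf => fun a : Fin k => (f a.succ).pred (by
        simp only [Finset.mem_filter] at hf
        exact (hf.1.2 0 a.succ (Fin.succ_pos a) |>.trans_le' (le_of_eq hf.2.symm)).ne'))
      (j := fun g _ => Fin.cons 0 (fun a => (g a).succ)) ?_ ?_ ?_ ?_ ?_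
    · intro f hf
      simp only [Finset.mem_filter] at hf ⊢
      refine ⟨Finset.mem_univ _, fun a b hab => ?_⟩
      rw [Fin.pred_lt_pred_iff]
      exact hf.1.2 _ _ (Fin.succ_lt_succ_iff.mpr hab)
    · intro g hg
      simp only [Finset.mem_filter] at hg ⊢
      refine ⟨⟨Finset.mem_univ _, fun a b hab => ?_⟩, by simp⟩
      rcases Fin.eq_zero_or_eq_succ a with rfl | ⟨a', rfl⟩
      · rcases Fin.eq_zero_or_eq_succ b with rfl | ⟨b', rfl⟩
        · exact absurd hab (lt_irrefl _)
        · simp [Fin.succ_pos]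
      · rcases Fin.eq_zero_or_eq_succ b with rfl | ⟨b', rfl⟩
        · exact absurd hab (by simp [Fin.le_zero_iff.mp hab.le])
        · simp only [Fin.cons_succ, Fin.succ_lt_succ_iff]
          exact hg.2 _ _ (Fin.succ_lt_succ_iff.mp hab)
    · intro f hf
      simp only [Finset.mem_filter] at hf
      funext a
      rcases Fin.eq_zero_or_eq_succ a with rfl | ⟨a', rfl⟩
      · simp [hf.2]
      · simp
    · intro g hg
      funext a
      simp
    · intro f hf
      simp only [Finset.mem_filter] at hf
      rw [Fin.prod_univ_succ]
      congr 1
      · rw [hf.2]; simp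
      · refine Finset.prod_congr rfl fun a _ => ?_
        have h1 : (1:ℕ) ≤ (f a.succ : ℕ) := by
          have := (hf.1.2 0 a.succ (Fin.succ_pos a)).trans_le' (le_of_eq hf.2.symm)
          omega
        have hv : ((f a.succ).pred (by
            exact (hf.1.2 0 a.succ (Fin.succ_pos a) |>.trans_le'
              (le_of_eq hf.2.symm)).ne') : ℕ) = (f a.succ : ℕ) - 1 := rfl
        beta_reduce
        rw [Fin.succ_pred]
        congr 1
        rw [hv, Nat.cast_sub h1, Fin.val_succ]
        push_cast
        ring
  · -- part B : f 0 ≠ 0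
    refine Finset.sum_bij'
      (i := fun f hf => fun a : Fin (k+1) => (f a).pred (by
        simp only [Finset.mem_filter] at hf
        rcases Fin.eq_zero_or_eq_succ a with rfl | ⟨a', rfl⟩
        · exact hf.2
        · exact (lt_of_le_of_lt (Fin.zero_le _)
            (hf.1.2 0 a'.succ (Fin.succ_pos a'))).ne'))
      (j := fun g _ => fun a => (g a).succ) ?_ ?_ ?_ ?_ ?_
    · intro f hf
      simp only [Finset.mem_filter] at hf ⊢
      refine ⟨Finset.mem_univ _, fun a b hab => ?_⟩
      rw [Fin.pred_lt_pred_iff]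
      exact hf.1.2 _ _ hab
    · intro g hg
      simp only [Finset.mem_filter] at hg ⊢
      exact ⟨⟨Finset.mem_univ _, fun a b hab => Fin.succ_lt_succ_iff.mpr (hg.2 _ _ hab)⟩,
        Fin.succ_ne_zero _⟩
    · intro f hf
      funext a
      simp
    · intro g hg
      funext a
      simp
    · intro f hf
      simp only [Finset.mem_filter] at hf
      refine Finset.prod_congr rfl fun a _ => ?_
      have hne : f a ≠ 0 := by
        rcases Fin.eq_zero_or_eq_succ a with rfl | ⟨a', rfl⟩
        · exact hf.2
        · exact (lt_of_le_of_lt (Fin.zero_le _) (hf.1.2 0 a'.succ (Fin.succ_pos a'))).ne'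
      have h1 : (1:ℕ) ≤ (f a : ℕ) := by
        have := Fin.pos_iff_ne_zero.mpr hne
        omega
      beta_reduce
      rw [Fin.succ_pred]
      congr 1
      have hv : (((f a).pred hne : Fin m) : ℕ) = (f a : ℕ) - 1 := rfl
      rw [hv, Nat.cast_sub h1]
      push_cast
      ring

lemma loopEZ_succ {K : Type*} [CommRing K] (n m : ℕ) (z : ℤ) (r : ZMod n)
    (q : Fin (m+1) → ZMod n → K) :
    loopEZ n (m+1) z r q =
      q 0 r * loopEZ n m (z-1) r (fun j => q j.succ)
        + loopEZ n m z (r-1) (fun j => q j.succ) := by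
  rcases lt_trichotomy z 0 with h|h|h
  · rw [loopEZ_neg h, loopEZ_neg h, loopEZ_neg (by omega), mul_zero, add_zero]
  · subst h
    rw [loopEZ_zero, loopEZ_zero, loopEZ_neg (by omega), mul_zero, zero_add]
  · have h1 : (0:ℤ) ≤ z - 1 := by omega
    simp only [loopEZ]
    rw [if_pos h.le, if_pos h1, if_pos h.le]
    have h2 : z.toNat = (z-1).toNat + 1 := by omega
    rw [h2, loopE_succ]

lemma mul_entry {K : Type*} [CommRing K] (n : ℕ) (hn : 2 ≤ n) (r : ZMod n → K) (t : K)
    (P : Matrix (Fin n) (Fin n) K) (a b : Fin n) :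
    (Mmat n r t * P) a b =
      r (((a : ℕ) + 1 : ℕ) : ZMod n) * P a b
      + (if (a : ℕ) = 0 then t * P ⟨n-1, by omega⟩ b
         else P ⟨(a : ℕ)-1, by omega⟩ b) := by
  rw [Matrix.mul_apply]
  simp only [Mmat, Matrix.of_apply, add_mul, Finset.sum_add_distrib]
  rw [add_assoc]
  congr 1
  · simp only [ite_mul, zero_mul]
    rw [Finset.sum_ite_eq]
    simp
  · by_cases h : (a : ℕ) = 0
    · rw [if_pos h]
      have h1 : (∑ c : Fin n, (if (a:ℕ) = (c:ℕ) + 1 then (1:K) else 0) * P c b) = 0 := by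
        apply Finset.sum_eq_zero
        intro c _
        rw [if_neg (by omega), zero_mul]
      rw [h1, zero_add]
      have h2 : ∀ c : Fin n, ((a:ℕ) = 0 ∧ (c:ℕ) = n - 1) = (c = (⟨n-1, by omega⟩ : Fin n)) := by
        intro c
        simp [Fin.ext_iff, h]
      simp only [ite_mul, zero_mul, h2]
      rw [Finset.sum_ite_eq']
      simp
    · rw [if_neg h]
      have h1 : (∑ c : Fin n, (if (a:ℕ) = 0 ∧ (c:ℕ) = n - 1 then t else 0) * P c b) = 0 := by
        apply Finset.sum_eq_zero
        intro c _
        rw [if_neg (by tauto), zero_mul]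
      rw [h1, add_zero]
      have ha : (a : ℕ) - 1 < n := by omega
      have h2 : ∀ c : Fin n, ((a:ℕ) = (c:ℕ) + 1) = (c = (⟨(a:ℕ)-1, ha⟩ : Fin n)) := by
        intro c
        simp only [Fin.ext_iff]
        refine propext ⟨fun hc => ?_, fun hc => ?_⟩ <;> omega
      simp only [ite_mul, one_mul, zero_mul, h2]
      rw [Finset.sum_ite_eq']
      simp

lemma main_aux {K : Type*} [CommRing K] (n : ℕ) (hn : 2 ≤ n) (t : K) :
    ∀ (m : ℕ) (q : Fin m → ZMod n → K) (a b : Fin n),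
      (List.ofFn (fun j : Fin m => Mmat n (q j) t)).prod a b =
        ∑ s ∈ Finset.range (m + 1),
          loopEZ n m (((b : ℕ) : ℤ) - ((a : ℕ) : ℤ) + (m : ℤ) - (s : ℤ) * (n : ℤ))
            (((a : ℕ) + 1 : ℕ) : ZMod n) q * t ^ s := by
  intro m
  induction m with
  | zero =>
    intro q a b
    rw [List.ofFn_zero, List.prod_nil, Finset.sum_range_one]
    have hb : (b:ℕ) < n := b.isLt
    have ha : (a:ℕ) < n := a.isLt
    rcases lt_trichotomy ((a:ℕ):ℤ) ((b:ℕ):ℤ) with h|h|h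
    · rw [Matrix.one_apply_ne (by intro hab; rw [hab] at h; omega)]
      rw [loopEZ_gt (by push_cast; omega), zero_mul]
    · have hab : a = b := Fin.ext (by exact_mod_cast h)
      subst hab
      rw [Matrix.one_apply_eq]
      rw [show ((a:ℕ):ℤ) - ((a:ℕ):ℤ) + ((0:ℕ):ℤ) - ((0:ℕ):ℤ)*(n:ℤ) = 0 by push_cast; omega]
      rw [loopEZ_zero, pow_zero, mul_one]
    · rw [Matrix.one_apply_ne (by intro hab; rw [hab] at h; omega)]
      rw [loopEZ_neg (by push_cast; omega), zero_mul]
  | succ m ih =>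
    intro q a b
    have hb : (b:ℕ) < n := b.isLt
    have ha : (a:ℕ) < n := a.isLt
    have ha0 : (0:ℤ) ≤ ((a:ℕ):ℤ) := Int.ofNat_nonneg _
    have h1n : (1:ℤ) ≤ (n:ℤ) := by exact_mod_cast (by omega : 1 ≤ n)
    have hbz : ((b:ℕ):ℤ) < (n:ℤ) := by exact_mod_cast hb
    have hmn : (m:ℤ) ≤ (m:ℤ) * (n:ℤ) := le_mul_of_one_le_right (Int.ofNat_nonneg m) h1n
    simp only [List.ofFn_succ, List.prod_cons]
    rw [mul_entry n hn (q 0) t _ a b, ih]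
    have e1 : ∀ s : ℕ, ((((b:ℕ):ℤ) - ((a:ℕ):ℤ) + (m:ℤ) + 1 - (s:ℤ)*(n:ℤ)) - 1)
        = ((b:ℕ):ℤ) - ((a:ℕ):ℤ) + (m:ℤ) - (s:ℤ)*(n:ℤ) := by intro s; push_cast; ring
    have e2 : ∀ s : ℕ, (((b:ℕ):ℤ) - ((a:ℕ):ℤ) + ((m+1:ℕ):ℤ) - (s:ℤ)*(n:ℤ))
        = ((b:ℕ):ℤ) - ((a:ℕ):ℤ) + (m:ℤ) + 1 - (s:ℤ)*(n:ℤ) := by intro s; push_cast; ring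
    simp only [e2, loopEZ_succ, e1]
    simp only [add_mul]
    rw [Finset.sum_add_distrib]
    have hAlast : (loopEZ n m ((((b:ℕ):ℤ)) - (((a:ℕ):ℤ)) + (m:ℤ) - (((m+1:ℕ)):ℤ) * (n:ℤ)) ((((a:ℕ)+1:ℕ)) : ZMod n) fun i => q i.succ) = 0 :=
      loopEZ_neg (by push_cast; nlinarith) _ _
    conv_rhs => rw [Finset.sum_range_succ]
    rw [hAlast, mul_zero, zero_mul, add_zero, Finset.mul_sum]
    simp only [mul_assoc]
    congr 1
    by_cases h0 : (a:ℕ) = 0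
    · rw [if_pos h0, ih]
      conv_rhs => rw [Finset.sum_range_succ']
      have h0' : ((a:ℕ):ℤ) = 0 := by exact_mod_cast h0
      have hgt0 : (loopEZ n m ((((b:ℕ):ℤ)) - (((a:ℕ):ℤ)) + (m:ℤ) + 1 - (((0:ℕ)):ℤ) * (n:ℤ)) (((((a:ℕ)+1:ℕ)) : ZMod n) - 1) fun i => q i.succ) = 0 := by
        apply loopEZ_gt
        push_cast
        omega
      rw [hgt0, zero_mul, add_zero, Finset.mul_sum]
      apply Finset.sum_congr rfl
      intro s _
      have hn1 : 1 ≤ n := by omega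
      have hz : ((b:ℕ):ℤ) - (((((⟨n-1, by omega⟩ : Fin n)):ℕ)):ℤ) + (m:ℤ) - (s:ℤ)*(n:ℤ)
          = ((b:ℕ):ℤ) - ((a:ℕ):ℤ) + (m:ℤ) + 1 - (((s+1:ℕ)):ℤ)*(n:ℤ) := by
        simp only [Fin.val_mk]
        push_cast [Nat.cast_sub hn1]
        linear_combination h0'
      have hr : (((((⟨n-1, by omega⟩ : Fin n)):ℕ) + 1 : ℕ) : ZMod n)
          = ((((a:ℕ)+1:ℕ)) : ZMod n) - 1 := by
        simp only [Fin.val_mk, h0, Nat.sub_add_cancel hn1, ZMod.natCast_self]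
        simp
      rw [hz, hr]
      ring
    · rw [if_neg h0, ih]
      conv_rhs => rw [Finset.sum_range_succ]
      have hlast : (loopEZ n m ((((b:ℕ):ℤ)) - (((a:ℕ):ℤ)) + (m:ℤ) + 1 - (((m+1:ℕ)):ℤ) * (n:ℤ)) (((((a:ℕ)+1:ℕ)) : ZMod n) - 1) fun i => q i.succ) = 0 := by
        apply loopEZ_neg
        have ha1 : (1:ℤ) ≤ ((a:ℕ):ℤ) := by omega
        push_cast
        nlinarith
      rw [hlast, zero_mul, add_zero]
      apply Finset.sum_congr rfl
      intro s _
      have ha1 : 1 ≤ (a:ℕ) := by omega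
      have hz : ((b:ℕ):ℤ) - (((((⟨(a:ℕ)-1, by omega⟩ : Fin n)):ℕ)):ℤ) + (m:ℤ) - (s:ℤ)*(n:ℤ)
          = ((b:ℕ):ℤ) - ((a:ℕ):ℤ) + (m:ℤ) + 1 - ((s:ℕ):ℤ)*(n:ℤ) := by
        simp only [Fin.val_mk]
        push_cast [Nat.cast_sub ha1]
        ring
      have hr : (((((⟨(a:ℕ)-1, by omega⟩ : Fin n)):ℕ) + 1 : ℕ) : ZMod n)
          = ((((a:ℕ)+1:ℕ)) : ZMod n) - 1 := by
        simp only [Fin.val_mk, Nat.sub_add_cancel ha1]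
        push_cast
        ring
      rw [hz, hr]

/-- Lemma 6.1: the `(i,j)` entry of `ℳ(t) = M(q₁;t)⋯M(q_m;t)` equals
`Σ_{s≥0} e^{(i)}_{j-i+m-sn} t^s` (indices of rows/columns are 1-based; the sum is
finite since the terms vanish for `s·n > j-i+m`). -/
theorem statement_19 {K : Type*} [CommRing K] (n m : ℕ) (hn : 2 ≤ n)
    (q : Fin m → ZMod n → K) (t : K) :
    ∀ a b : Fin n,
      (List.ofFn (fun j : Fin m => Mmat n (q j) t)).prod a b =
        ∑ s ∈ Finset.range (m + n + 1),
          loopEZ n m (((b : ℕ) : ℤ) - ((a : ℕ) : ℤ) + (m : ℤ) - (s : ℤ) * (n : ℤ))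
            (((a : ℕ) + 1 : ℕ) : ZMod n) q * t ^ s := by
  intro a b
  rw [main_aux n hn t m q a b]
  apply Finset.sum_subset
  · exact Finset.range_subset_range.mpr (by omega)
  · intro s _ hs
    have hs1 : m + 1 ≤ s := by
      simpa [Finset.mem_range] using hs
    have hb : ((b:ℕ):ℤ) < (n:ℤ) := by exact_mod_cast b.isLt
    have ha0 : (0:ℤ) ≤ ((a:ℕ):ℤ) := Int.ofNat_nonneg _
    have h1n : (1:ℤ) ≤ (n:ℤ) := by exact_mod_cast (by omega : 1 ≤ n)
    have hsz : ((m:ℤ)+1) ≤ (s:ℤ) := by exact_mod_cast hs1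
    have hmul : ((m:ℤ)+1) * (n:ℤ) ≤ (s:ℤ) * (n:ℤ) :=
      mul_le_mul_of_nonneg_right hsz (by omega)
    have hmn : (m:ℤ) ≤ (m:ℤ) * (n:ℤ) := le_mul_of_one_le_right (Int.ofNat_nonneg m) h1n
    rw [loopEZ_neg (by nlinarith) _ _, zero_mul]
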